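/- arXiv:2106.13114 — 4 statements merged into one kernel-verified Lean document; each statement's English description precedes it below -/
import Mathlib

section
/- Let $(A, E, \varepsilon, \tau)$ satisfy all axioms of an analytical $B$-$B$-non-commutative probability space except possibly complete positivity of $E$ on the left and right subalgebras. If $B$ is a C$^*$-algebra and $\tau_B$ is faithful, then $E$ restricted to $A_\ell$ is completely positive: for every $d \in \mathbb{N}$ and every matrix $T = [a_{i,j}] \in M_d(A_\ell)$, the matrix $[E(\sum_k a_{k,i}^* a_{k,j})]_{i,j} \in M_d(B)$ is positive. -/
open scoped ComplexOrder

/-- An analytical `B`-`B`-non-commutative probability space: a unital `*`-algebra `A`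
together with left and right embeddings `L, R` of `B` (coming from a unital
`*`-homomorphism `ε : B ⊗ Bᵒᵖ → A` with injective restrictions), a `B`-`B`-bimodular
expectation `E : A → B`, and a state `τ : A → ℂ` compatible with `E` whose restriction
`τ_B = τ ∘ L` to `B` is tracial. -/
structure AnalyticBBNCPS (B A : Type*) [Ring B] [StarRing B] [Algebra ℂ B]
    [Ring A] [StarRing A] [Algebra ℂ A] where
  L : B → A
  R : B → A
  E : A → B
  tau : A → ℂ
  L_one : L 1 = 1
  L_add : ∀ b₁ b₂, L (b₁ + b₂) = L b₁ + L b₂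
  L_mul : ∀ b₁ b₂, L (b₁ * b₂) = L b₁ * L b₂
  L_smul : ∀ (c : ℂ) (b : B), L (c • b) = c • L b
  L_star : ∀ b, L (star b) = star (L b)
  R_one : R 1 = 1
  R_add : ∀ b₁ b₂, R (b₁ + b₂) = R b₁ + R b₂
  R_mul : ∀ b₁ b₂, R (b₁ * b₂) = R b₂ * R b₁
  R_smul : ∀ (c : ℂ) (b : B), R (c • b) = c • R b
  R_star : ∀ b, R (star b) = star (R b)
  LR_comm : ∀ b₁ b₂, L b₁ * R b₂ = R b₂ * L b₁
  L_inj : Function.Injective L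
  R_inj : Function.Injective R
  E_one : E 1 = 1
  E_add : ∀ a₁ a₂, E (a₁ + a₂) = E a₁ + E a₂
  E_smul : ∀ (c : ℂ) (a : A), E (c • a) = c • E a
  E_bimod : ∀ b₁ b₂ a, E (L b₁ * R b₂ * a) = b₁ * E a * b₂
  E_LR : ∀ a b, E (a * L b) = E (a * R b)
  tau_one : tau 1 = 1
  tau_add : ∀ a₁ a₂, tau (a₁ + a₂) = tau a₁ + tau a₂
  tau_smul : ∀ (c : ℂ) (a : A), tau (c • a) = c • tau a
  tau_pos : ∀ a, 0 ≤ tau (star a * a)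
  tau_compat_L : ∀ a, tau a = tau (L (E a))
  tau_compat_R : ∀ a, tau a = tau (R (E a))
  tauB_tracial : ∀ b₁ b₂, tau (L (b₁ * b₂)) = tau (L (b₂ * b₁))

/-- If `B` is a C*-algebra and `τ_B` is faithful, then `E` is completely positive on
the left algebra `A_ℓ`: for every `d` and every matrix `[a_{i,j}]` with entries in
`A_ℓ` (elements commuting with all `R_b`), the matrix `[E(∑_k a_{k,i}^* a_{k,j})]`
is positive in `M_d(B)`, equivalently (since `B` is a C*-algebra and `τ_B` faithful)
`⟨E_d(T^* T) h, h⟩_{L²(B,τ_B)^d} = ∑_{i,j} τ_B(h_i^* E(∑_k a_{k,i}^* a_{k,j}) h_j) ≥ 0`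
for every vector `h ∈ B^d`. -/
theorem expectation_completely_positive_on_left {B A : Type*}
    [NormedRing B] [StarRing B] [CStarRing B] [NormedAlgebra ℂ B] [CompleteSpace B]
    [StarModule ℂ B]
    [Ring A] [StarRing A] [Algebra ℂ A] (P : AnalyticBBNCPS B A)
    (hfaithful : ∀ b : B, P.tau (P.L (star b * b)) = 0 → b = 0)
    (d : ℕ) (a : Fin d → Fin d → A)
    (ha : ∀ i j : Fin d, ∀ b : B, a i j * P.R b = P.R b * a i j) :
    ∀ h : Fin d → B,
      0 ≤ ∑ i : Fin d, ∑ j : Fin d,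
        P.tau (P.L (star (h i) * P.E (∑ k : Fin d, star (a k i) * a k j) * h j)) := by

  intro h
  classical
  have tau0 : P.tau 0 = 0 := by
    have := P.tau_smul 0 1
    simpa using this
  let T : A →+ ℂ := ⟨⟨P.tau, tau0⟩, P.tau_add⟩
  have tau_sum : ∀ {ι : Type} (s : Finset ι) (f : ι → A),
      P.tau (∑ k ∈ s, f k) = ∑ k ∈ s, P.tau (f k) := by
    intro ι s f
    exact map_sum T f s
  have tau_LR : ∀ x b, P.tau (x * P.L b) = P.tau (x * P.R b) := by
    intro x b
    rw [P.tau_compat_L (x * P.L b), P.E_LR, ← P.tau_compat_L]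
  have hstar : ∀ i j b, star (a i j) * P.R b = P.R b * star (a i j) := by
    intro i j b
    have h1 := congrArg star (ha i j (star b))
    rw [star_mul, star_mul, ← P.R_star, star_star] at h1
    exact h1.symm
  have key : ∀ i j, P.tau (P.L (star (h i) * P.E (∑ k : Fin d, star (a k i) * a k j) * h j)
      ) = ∑ k : Fin d, P.tau ((P.L (star (h i)) * star (a k i)) * (a k j * P.L (h j))) := by
    intro i j
    rw [← P.E_bimod, ← P.tau_compat_L, Finset.mul_sum, tau_sum]
    refine Finset.sum_congr rfl fun k _ => ?_
    have comm : (star (a k i) * a k j) * P.R (h j) = P.R (h j) * (star (a k i) * a k j) := by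
      rw [mul_assoc, ha k j, ← mul_assoc, hstar k i, mul_assoc]
    have step : P.L (star (h i)) * P.R (h j) * (star (a k i) * a k j)
        = (P.L (star (h i)) * star (a k i) * a k j) * P.R (h j) := by
      rw [mul_assoc, ← comm]
      simp [mul_assoc]
    rw [step, ← tau_LR]
    congr 1
    simp [mul_assoc]
  have expand : ∀ k, P.tau (star (∑ j : Fin d, a k j * P.L (h j)) * (∑ j : Fin d, a k j * P.L (h j)))
      = ∑ i : Fin d, ∑ j : Fin d, P.tau ((P.L (star (h i)) * star (a k i)) * (a k j * P.L (h j))) := by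
    intro k
    rw [star_sum, Finset.sum_mul_sum, tau_sum]
    refine Finset.sum_congr rfl fun i _ => ?_
    rw [tau_sum]
    refine Finset.sum_congr rfl fun j _ => ?_
    congr 2
    rw [star_mul, ← P.L_star]
  have main : ∑ i : Fin d, ∑ j : Fin d,
        P.tau (P.L (star (h i) * P.E (∑ k : Fin d, star (a k i) * a k j) * h j))
      = ∑ k : Fin d, P.tau (star (∑ j : Fin d, a k j * P.L (h j)) * (∑ j : Fin d, a k j * P.L (h j))) := by
    simp_rw [key, expand]
    calc ∑ i : Fin d, ∑ j : Fin d, ∑ k : Fin d,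
            P.tau ((P.L (star (h i)) * star (a k i)) * (a k j * P.L (h j)))
        = ∑ i : Fin d, ∑ k : Fin d, ∑ j : Fin d,
            P.tau ((P.L (star (h i)) * star (a k i)) * (a k j * P.L (h j))) :=
          Finset.sum_congr rfl fun i _ => Finset.sum_comm
      _ = ∑ k : Fin d, ∑ i : Fin d, ∑ j : Fin d,
            P.tau ((P.L (star (h i)) * star (a k i)) * (a k j * P.L (h j))) :=
          Finset.sum_comm
  rw [main]
  exact Finset.sum_nonneg fun k _ => P.tau_pos _
end

section
/- Let $\mathcal{A}$ and $B$ be unital C$^*$-algebras, $\varphi : \mathcal{A} \to \mathbb{C}$ a state, and $\tau_B : B \to \mathbb{C}$ a tracial state. Define $\tau$ on the algebraic tensor product $A = \mathcal{A} \otimes B \otimes B^{op}$ by $\tau(Z \otimes b_1 \otimes b_2) = \varphi(Z)\, \tau_B(b_1 b_2)$ (extended linearly). Then $\tau$ is positive: $\tau(a^* a) \ge 0$ for all $a \in A$. -/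
open scoped ComplexOrder Matrix

section Aux
variable {A : Type*} [NormedRing A] [StarRing A] [NormedAlgebra ℂ A] [StarModule ℂ A]

/-- A positive linear functional is conjugate-symmetric on its sesquilinear form. -/
lemma pos_lin_conj (φ : A →ₗ[ℂ] ℂ) (hpos : ∀ a : A, 0 ≤ φ (star a * a)) (x y : A) :
    (starRingEnd ℂ) (φ (star x * y)) = φ (star y * x) := by
  have him : ∀ a : A, (φ (star a * a)).im = 0 := fun a =>
    ((Complex.le_def.mp (hpos a)).2).symm
  have h1 := him (x + y)
  have h2 := him (x + Complex.I • y)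
  have e1 : star (x + y) * (x + y)
      = star x * x + star x * y + star y * x + star y * y := by
    simp only [star_add, add_mul, mul_add]; abel
  have e2 : star (x + Complex.I • y) * (x + Complex.I • y)
      = star x * x + Complex.I • (star x * y) + (-Complex.I) • (star y * x)
        + star y * y := by
    simp only [star_add, star_smul, add_mul, mul_add, smul_mul_assoc, mul_smul_comm,
      Complex.star_def, Complex.conj_I]
    match_scalars <;> simp [pow_two, Complex.I_mul_I]
  rw [e1] at h1
  rw [e2] at h2
  simp only [map_add, map_smul, Complex.add_im, Complex.smul_im, him x, him y,
    smul_eq_mul, Complex.mul_im, Complex.I_re, Complex.I_im, Complex.neg_re,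
    Complex.neg_im] at h1 h2
  apply Complex.ext <;>
    simp [Complex.conj_re, Complex.conj_im] <;> linarith

/-- The Gram matrix of a positive linear functional is positive semidefinite. -/
lemma gram_posSemidef (φ : A →ₗ[ℂ] ℂ) (hpos : ∀ a : A, 0 ≤ φ (star a * a))
    {m : ℕ} (x : Fin m → A) :
    (Matrix.of fun i j => φ (star (x i) * x j)).PosSemidef := by
  refine Matrix.PosSemidef.of_dotProduct_mulVec_nonneg ?_ ?_
  · ext i j
    simp only [Matrix.conjTranspose_apply, Matrix.of_apply, RCLike.star_def]
    exact pos_lin_conj φ hpos _ _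
  · intro v
    have key : (star v) ⬝ᵥ ((Matrix.of fun i j => φ (star (x i) * x j)) *ᵥ v)
        = φ (star (∑ i, v i • x i) * ∑ j, v j • x j) := by
      simp only [dotProduct, Matrix.mulVec, Matrix.of_apply, Pi.star_apply,
        star_sum, star_smul, Finset.sum_mul, Finset.mul_sum, map_sum, map_smul,
        smul_mul_assoc, mul_smul_comm, smul_eq_mul, Complex.star_def]
      rw [Finset.sum_comm]
      refine Finset.sum_congr rfl fun i _ => Finset.sum_congr rfl fun j _ => ?_
      ring
    rw [key]
    exact hpos _

end Aux

/-- Positivity of `τ = φ ⊗ (τ_B ∘ mult)` on the algebraic tensor product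
`A = 𝒜 ⊗ B ⊗ Bᵒᵖ`, where `τ(Z ⊗ b₁ ⊗ b₂) = φ(Z) τ_B(b₁ b₂)`: for a general element
`a = ∑_k Z_k ⊗ b_k ⊗ c_k` one has
`τ(a^* a) = ∑_{i,j} φ(Z_i^* Z_j) τ_B(b_i^* b_j (c_j c_i^*)) ≥ 0`,
whenever `𝒜` and `B` are unital C*-algebras, `φ` is a state on `𝒜`, and `τ_B` is a
tracial state on `B`. -/


theorem tensor_state_positive {𝒜 B : Type*}
    [NormedRing 𝒜] [StarRing 𝒜] [CStarRing 𝒜] [NormedAlgebra ℂ 𝒜] [CompleteSpace 𝒜]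
    [StarModule ℂ 𝒜]
    [NormedRing B] [StarRing B] [CStarRing B] [NormedAlgebra ℂ B] [CompleteSpace B]
    [StarModule ℂ B]
    (φ : 𝒜 →ₗ[ℂ] ℂ) (hφ_one : φ 1 = 1) (hφ_pos : ∀ a : 𝒜, 0 ≤ φ (star a * a))
    (τB : B →ₗ[ℂ] ℂ) (hτ_one : τB 1 = 1) (hτ_pos : ∀ b : B, 0 ≤ τB (star b * b))
    (hτ_tracial : ∀ b₁ b₂ : B, τB (b₁ * b₂) = τB (b₂ * b₁))
    (m : ℕ) (Z : Fin m → 𝒜) (b c : Fin m → B) :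
    0 ≤ ∑ i : Fin m, ∑ j : Fin m,
      φ (star (Z i) * Z j) * τB (star (b i) * b j * (c j * star (c i))) := by
  set w : Fin m → B := fun k => b k * c k with hw
  have hterm : ∀ i j, τB (star (b i) * b j * (c j * star (c i)))
      = τB (star (w i) * w j) := by
    intro i j
    have h1 : star (b i) * b j * (c j * star (c i))
        = (star (b i) * (b j * c j)) * star (c i) := by noncomm_ring
    have h2 : star (c i) * (star (b i) * (b j * c j)) = star (w i) * w j := by
      simp only [hw, star_mul]; noncomm_ring
    rw [h1, ← hτ_tracial, h2]
  set M : Matrix (Fin m) (Fin m) ℂ := Matrix.of fun i j => φ (star (Z i) * Z j) with hM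
  set N : Matrix (Fin m) (Fin m) ℂ := Matrix.of fun i j => τB (star (w i) * w j) with hN
  have hMps := gram_posSemidef φ hφ_pos Z
  have hNps := gram_posSemidef τB hτ_pos w
  obtain ⟨C, hC⟩ : ∃ C : Matrix (Fin m) (Fin m) ℂ,
      (Matrix.of fun i j => φ (star (Z i) * Z j)) = Cᴴ * C := by
    open MatrixOrder in
    exact ⟨CFC.sqrt M, by
      rw [(Matrix.nonneg_iff_posSemidef.mp (CFC.sqrt_nonneg M)).1.eq]
      exact (CFC.sqrt_mul_sqrt_self M hMps.nonneg).symm⟩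
  have hMentry : ∀ i j, φ (star (Z i) * Z j) = ∑ k, star (C k i) * C k j := by
    intro i j
    have : M i j = (Cᴴ * C) i j := by rw [hM, hC]
    simpa [hM, Matrix.mul_apply, Matrix.conjTranspose_apply] using this
  have hgoal : ∑ i : Fin m, ∑ j : Fin m,
      φ (star (Z i) * Z j) * τB (star (b i) * b j * (c j * star (c i)))
      = ∑ k : Fin m, (star (fun i => C k i)) ⬝ᵥ (N *ᵥ (fun i => C k i)) := by
    calc ∑ i : Fin m, ∑ j : Fin m,
        φ (star (Z i) * Z j) * τB (star (b i) * b j * (c j * star (c i)))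
        = ∑ i : Fin m, ∑ j : Fin m, ∑ k : Fin m,
            star (C k i) * (τB (star (w i) * w j) * C k j) := by
          refine Finset.sum_congr rfl fun i _ => Finset.sum_congr rfl fun j _ => ?_
          rw [hterm, hMentry, Finset.sum_mul]
          exact Finset.sum_congr rfl fun k _ => by ring
      _ = ∑ i : Fin m, ∑ k : Fin m, ∑ j : Fin m,
            star (C k i) * (τB (star (w i) * w j) * C k j) :=
          Finset.sum_congr rfl fun i _ => Finset.sum_comm
      _ = ∑ k : Fin m, ∑ i : Fin m, ∑ j : Fin m,
            star (C k i) * (τB (star (w i) * w j) * C k j) := Finset.sum_comm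
      _ = ∑ k : Fin m, (star (fun i => C k i)) ⬝ᵥ (N *ᵥ (fun i => C k i)) := by
          refine Finset.sum_congr rfl fun k _ => ?_
          simp [dotProduct, Matrix.mulVec, hN, Finset.mul_sum]
  rw [hgoal]
  exact Finset.sum_nonneg fun k _ => hNps.dotProduct_mulVec_nonneg _
end

section
/- Let $(\mathcal{A}, \varphi)$ be a C$^*$-non-commutative probability space, let $x, y \in \mathcal{A}$, let $E_{1,2}, E_{2,1}$ denote matrix units in $M_2(\mathbb{C})$, set $X = x \otimes E_{1,2} \otimes I_2 + x^* \otimes E_{2,1} \otimes I_2$ and $Y = y \otimes I_2 \otimes E_{1,2} + y^* \otimes I_2 \otimes E_{2,1}$ in $A_2 = \mathcal{A} \otimes M_2(\mathbb{C}) \otimes M_2(\mathbb{C})^{op}$, and let $\tau_2 = \mathrm{tr}_2 \circ E_2$ with $E_2(Z \otimes b_1 \otimes b_2) = \varphi(Z) b_1 b_2$. Then for any $n \in \mathbb{N}$, $Z_1, \ldots, Z_n \in \{X, Y\}$, with $\chi(k) = \ell$ when $Z_k = X$ and $\chi(k) = r$ when $Z_k = Y$, and $z_k = x$ or $y$ correspondingly: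 if $n$ is odd then $\tau_2(Z_1 \cdots Z_n) = 0$, and if $n$ is even then $\tau_2(Z_1 \cdots Z_n) = \frac{1}{2}\big(\varphi(z_1^{p_1} \cdots z_n^{p_n}) + \varphi(z_1^{q_1} \cdots z_n^{q_n})\big)$, where $p_{s_\chi(k)} = 1$ for $k$ odd and $*$ for $k$ even, and $q_{s_\chi(k)} = *$ for $k$ odd and $1$ for $k$ even. -/
open scoped ComplexOrder

/-- `s` is the permutation `s_χ` associated to `χ : Fin n → Bool` (`true` = left `ℓ`,
`false` = right `r`): left indices in increasing order, then right indices in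
decreasing order. -/
def IsOrderPerm {n : ℕ} (χ : Fin n → Bool) (s : Equiv.Perm (Fin n)) : Prop :=
  (∀ k l : Fin n, χ (s k) = true → χ (s l) = true → (k ≤ l ↔ s k ≤ s l)) ∧
  (∀ k l : Fin n, χ (s k) = false → χ (s l) = false → (k ≤ l ↔ s l ≤ s k)) ∧
  (∀ k l : Fin n, χ (s k) = true → χ (s l) = false → k < l)

/-- The element `X = x ⊗ E_{1,2} ⊗ I₂ + x^* ⊗ E_{2,1} ⊗ I₂` of
`A₂ = 𝒜 ⊗ M₂(ℂ) ⊗ M₂(ℂ)ᵒᵖ`, realized concretely as a matrix indexed by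
`Fin 2 × Fin 2` (the first component carrying the left `M₂(ℂ)` action, the second
the right `M₂(ℂ)ᵒᵖ` action): `(a ⊗ b₁ ⊗ b₂)_{(i,i'),(j,j')} = (b₁)_{ij} (b₂)_{j'i'} a`. -/
def opX {𝒜 : Type*} [Ring 𝒜] [StarRing 𝒜]
    (x : 𝒜) : Matrix (Fin 2 × Fin 2) (Fin 2 × Fin 2) 𝒜 :=
  fun p q =>
    if p.2 = q.2 then
      (if p.1 = 0 ∧ q.1 = 1 then x else if p.1 = 1 ∧ q.1 = 0 then star x else 0)
    else 0

/-- The element `Y = y ⊗ I₂ ⊗ E_{1,2} + y^* ⊗ I₂ ⊗ E_{2,1}` of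
`A₂ = 𝒜 ⊗ M₂(ℂ) ⊗ M₂(ℂ)ᵒᵖ`, in the same concrete realization. -/
def opY {𝒜 : Type*} [Ring 𝒜] [StarRing 𝒜]
    (y : 𝒜) : Matrix (Fin 2 × Fin 2) (Fin 2 × Fin 2) 𝒜 :=
  fun p q =>
    if p.1 = q.1 then
      (if q.2 = 0 ∧ p.2 = 1 then y else if q.2 = 1 ∧ p.2 = 0 then star y else 0)
    else 0

/-- The state `τ₂ = tr₂ ∘ E₂` on `A₂ = 𝒜 ⊗ M₂(ℂ) ⊗ M₂(ℂ)ᵒᵖ`, where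
`E₂(Z ⊗ b₁ ⊗ b₂) = φ(Z) b₁ b₂` and `tr₂` is the normalized trace: in the concrete
matrix realization, `τ₂(M) = (1/2) ∑_{i,j} φ(M_{(i,i),(j,j)})`. -/
noncomputable def tau2 {𝒜 : Type*} [Ring 𝒜] [Module ℂ 𝒜] (φ : 𝒜 →ₗ[ℂ] ℂ)
    (M : Matrix (Fin 2 × Fin 2) (Fin 2 × Fin 2) 𝒜) : ℂ :=
  (1 / 2 : ℂ) * ∑ i : Fin 2, ∑ j : Fin 2, φ (M (i, i) (j, j))

open Fin.NatCast

section Aux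

variable {𝒜 : Type*} [Ring 𝒜] [StarRing 𝒜]

/-- running count of `b`-positions strictly before `k`. -/
def cnt {n : ℕ} (χ : Fin n → Bool) (b : Bool) (k : ℕ) : ℕ :=
  ∑ m : Fin n, if (m : ℕ) < k ∧ χ m = b then 1 else 0

lemma cnt_zero {n : ℕ} (χ : Fin n → Bool) (b : Bool) : cnt χ b 0 = 0 := by
  simp [cnt]

lemma cnt_succ {n : ℕ} (χ : Fin (n + 1) → Bool) (b : Bool) (k : ℕ) :
    cnt χ b (k + 1) = (if χ 0 = b then 1 else 0) + cnt (fun m => χ m.succ) b k := by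
  unfold cnt
  rw [Fin.sum_univ_succ]
  congr 1
  · simp
  · exact Finset.sum_congr rfl fun m _ => by simp [Fin.val_succ, Nat.succ_lt_succ_iff]

lemma cnt_eq_card {n : ℕ} (χ : Fin n → Bool) (b : Bool) (k : ℕ) :
    cnt χ b k = (Finset.univ.filter fun m : Fin n => (m : ℕ) < k ∧ χ m = b).card := by
  rw [Finset.card_filter]; rfl

lemma count_tf (w : List Bool) : w.count true + w.count false = w.length := by
  induction w with
  | nil => simp
  | cons b t ih => cases b <;> simp [List.count_cons] <;> omega

lemma fin2_c0 (c : ℕ) : ((c : Fin 2) = 0) ↔ c % 2 = 0 := by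
  simp [Fin.ext_iff, Fin.val_natCast]
lemma fin2_c1 (c : ℕ) : ((c : Fin 2) = 1) ↔ c % 2 = 1 := by
  simp [Fin.ext_iff, Fin.val_natCast]
lemma fin2_1c0 (c : ℕ) : ((1 + (c : Fin 2)) = 0) ↔ c % 2 = 1 := by
  simp [Fin.ext_iff, Fin.val_add, Fin.val_natCast]; omega
lemma fin2_1c1 (c : ℕ) : ((1 + (c : Fin 2)) = 1) ↔ c % 2 = 0 := by
  simp [Fin.ext_iff, Fin.val_add, Fin.val_natCast]
lemma fin2_cast_eq (a b : ℕ) : (a : Fin 2) = (b : Fin 2) ↔ a % 2 = b % 2 := by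
  simp [Fin.ext_iff, Fin.val_natCast]

/-- the monomial appearing in the matrix entries of a product of `opX`/`opY`s. -/
def mono (x y : 𝒜) : List Bool → Fin 2 → Fin 2 → 𝒜
  | [], _, _ => 1
  | true :: w, i, i' => (if i = 0 then x else star x) * mono x y w (i + 1) i'
  | false :: w, i, i' => (if i' = 1 then y else star y) * mono x y w i (i' + 1)

lemma prod_entry (x y : 𝒜) : ∀ (w : List Bool) (i i' j j' : Fin 2),
    ((w.map (fun b : Bool => if b = true then opX x else opY y)).prod) (i, i') (j, j') =
      if j = i + (w.count true : Fin 2) ∧ j' = i' + (w.count false : Fin 2)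
      then mono x y w i i' else 0 := by
  intro w
  induction w with
  | nil =>
    intro i i' j j'
    simp [Matrix.one_apply, mono, Prod.ext_iff, and_comm, eq_comm]
  | cons b t ih =>
    intro i i' j j'
    cases b with
    | true =>
      rw [List.map_cons, List.prod_cons, Matrix.mul_apply]
      rw [Fintype.sum_prod_type]
      simp only [Fin.sum_univ_two]
      simp only [ih]
      fin_cases i <;> fin_cases i' <;>
        simp [opX, mono, List.count_cons, Nat.cast_add, Nat.cast_one, ← add_assoc,
          show ∀ a : Fin 2, a + 1 + 1 = a from by decide, add_comm, add_left_comm]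
    | false =>
      rw [List.map_cons, List.prod_cons, Matrix.mul_apply]
      rw [Fintype.sum_prod_type]
      simp only [Fin.sum_univ_two]
      simp only [ih]
      fin_cases i <;> fin_cases i' <;>
        simp [opY, mono, List.count_cons, Nat.cast_add, Nat.cast_one, ← add_assoc,
          show ∀ a : Fin 2, a + 1 + 1 = a from by decide, add_comm, add_left_comm]

lemma mono_ofFn (x y : 𝒜) : ∀ (n : ℕ) (χ : Fin n → Bool) (i i' : Fin 2),
    mono x y (List.ofFn χ) i i' = (List.ofFn fun k : Fin n =>
      if χ k = true then (if i + ((cnt χ true (k : ℕ)) : Fin 2) = 0 then x else star x)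
      else (if i' + ((cnt χ false (k : ℕ)) : Fin 2) = 1 then y else star y)).prod := by
  intro n
  induction n with
  | zero => intro χ i i'; simp [mono]
  | succ n ih =>
    intro χ i i'
    rw [List.ofFn_succ, List.ofFn_succ (f := fun k : Fin (n+1) =>
      if χ k = true then (if i + ((cnt χ true (k : ℕ)) : Fin 2) = 0 then x else star x)
      else (if i' + ((cnt χ false (k : ℕ)) : Fin 2) = 1 then y else star y)), List.prod_cons]
    cases hχ : χ 0 with
    | true =>
      rw [show mono x y (true :: List.ofFn fun k : Fin n => χ k.succ) i i' =
        (if i = 0 then x else star x) * mono x y (List.ofFn fun k : Fin n => χ k.succ) (i + 1) i'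
        from rfl]
      rw [ih]
      refine congrArg₂ (· * ·) ?_
        (congrArg (fun f : Fin n → 𝒜 => (List.ofFn f).prod) (funext fun k => ?_))
      · simp [cnt_zero, hχ]
      · have h1 : cnt χ true ((k.succ : Fin (n+1)) : ℕ) = 1 + cnt (fun m => χ m.succ) true k := by
          rw [Fin.val_succ, cnt_succ, hχ]; simp
        have h2 : cnt χ false ((k.succ : Fin (n+1)) : ℕ) = cnt (fun m => χ m.succ) false k := by
          rw [Fin.val_succ, cnt_succ, hχ]; simp
        rw [h1, h2]
        push_cast
        rw [← add_assoc]
    | false =>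
      rw [show mono x y (false :: List.ofFn fun k : Fin n => χ k.succ) i i' =
        (if i' = 1 then y else star y) * mono x y (List.ofFn fun k : Fin n => χ k.succ) i (i' + 1)
        from rfl]
      rw [ih]
      refine congrArg₂ (· * ·) ?_
        (congrArg (fun f : Fin n → 𝒜 => (List.ofFn f).prod) (funext fun k => ?_))
      · simp [cnt_zero, hχ]
      · have h1 : cnt χ true ((k.succ : Fin (n+1)) : ℕ) = cnt (fun m => χ m.succ) true k := by
          rw [Fin.val_succ, cnt_succ, hχ]; simp
        have h2 : cnt χ false ((k.succ : Fin (n+1)) : ℕ) = 1 + cnt (fun m => χ m.succ) false k := by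
          rw [Fin.val_succ, cnt_succ, hχ]; simp
        rw [h1, h2]
        push_cast
        rw [← add_assoc]

lemma perm_true {n : ℕ} {χ : Fin n → Bool} {s : Equiv.Perm (Fin n)}
    (hs : IsOrderPerm χ s) (j : Fin n) (hj : χ j = true) :
    (s.symm j : ℕ) = cnt χ true j := by
  set K := s.symm j with hK
  have hsK : s K = j := s.apply_symm_apply j
  rw [cnt_eq_card, ← Fin.card_Iio K]
  apply Finset.card_bij (fun k _ => s k)
  · intro k hk
    rw [Finset.mem_Iio] at hk
    have hχ : χ (s k) = true := by
      by_contra h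
      have := hs.2.2 K k (by rw [hsK]; exact hj) (by simpa using h)
      exact absurd hk (not_lt.2 this.le)
    have hle : s k ≤ j := by
      rw [← hsK]; exact ((hs.1 k K hχ (by rw [hsK]; exact hj)).mp hk.le)
    have hne : s k ≠ j := by
      rw [← hsK]; exact fun h => (ne_of_lt hk) (s.injective h)
    simp only [Finset.mem_filter, Finset.mem_univ, true_and]
    exact ⟨Fin.lt_def.mp (lt_of_le_of_ne hle hne), hχ⟩
  · intro a _ b _ h; exact s.injective h
  · intro m hm
    simp only [Finset.mem_filter, Finset.mem_univ, true_and] at hm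
    refine ⟨s.symm m, ?_, s.apply_symm_apply m⟩
    rw [Finset.mem_Iio]
    have hχ : χ (s (s.symm m)) = true := by rw [s.apply_symm_apply]; exact hm.2
    have hlt : (m : ℕ) < (j : ℕ) := hm.1
    have hle : s.symm m ≤ K :=
      (hs.1 (s.symm m) K hχ (by rw [hsK]; exact hj)).mpr
        (by rw [s.apply_symm_apply, hsK]; exact le_of_lt (Fin.lt_def.mpr hlt))
    have hne : s.symm m ≠ K := fun h => by
      have hmj : m = j := s.symm.injective (by rw [h, hK])
      exact lt_irrefl (j : ℕ) (hmj ▸ hlt)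
    exact lt_of_le_of_ne hle hne

lemma perm_false {n : ℕ} {χ : Fin n → Bool} {s : Equiv.Perm (Fin n)}
    (hs : IsOrderPerm χ s) (j : Fin n) (hj : χ j = false) :
    (s.symm j : ℕ) + 1 + cnt χ false j = n := by
  set K := s.symm j with hK
  have hsK : s K = j := s.apply_symm_apply j
  have hcard : cnt χ false (j : ℕ) = (Finset.Ioi K).card := by
    rw [cnt_eq_card]
    apply Finset.card_bij (fun m hm => s.symm m)
    · intro m hm
      simp only [Finset.mem_filter, Finset.mem_univ, true_and] at hm
      rw [Finset.mem_Ioi]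
      have hχ : χ (s (s.symm m)) = false := by rw [s.apply_symm_apply]; exact hm.2
      have hle : K ≤ s.symm m :=
        (hs.2.1 K (s.symm m) (by rw [hsK]; exact hj) hχ).mpr
          (by rw [s.apply_symm_apply, hsK]; exact le_of_lt (Fin.lt_def.mpr hm.1))
      have hne : K ≠ s.symm m := fun h => by
        have hmj : m = j := s.symm.injective (by rw [← h, hK])
        exact lt_irrefl (j : ℕ) (hmj ▸ hm.1)
      exact lt_of_le_of_ne hle hne
    · intro a _ b _ h; exact (Equiv.injective _) h
    · intro k hk
      rw [Finset.mem_Ioi] at hk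
      refine ⟨s k, ?_, s.symm_apply_apply k⟩
      have hχ : χ (s k) = false := by
        by_contra h
        have := hs.2.2 k K (by simpa using h) (by rw [hsK]; exact hj)
        exact absurd hk (not_lt.2 this.le)
      have hle : s k ≤ j := by
        rw [← hsK]; exact (hs.2.1 K k (by rw [hsK]; exact hj) hχ).mp hk.le
      have hne : s k ≠ j := fun h => (ne_of_lt hk).symm (by rw [← hsK] at h; exact s.injective h)
      simp only [Finset.mem_filter, Finset.mem_univ, true_and]
      exact ⟨Fin.lt_def.mp (lt_of_le_of_ne hle hne), hχ⟩
  rw [hcard, Fin.card_Ioi]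
  have : (K : ℕ) < n := K.isLt
  omega

end Aux

/-- Joint `τ₂`-moments of the pair `(X, Y)` with
`X = x ⊗ E_{1,2} ⊗ I₂ + x^* ⊗ E_{2,1} ⊗ I₂`,
`Y = y ⊗ I₂ ⊗ E_{1,2} + y^* ⊗ I₂ ⊗ E_{2,1}`: for `Z_k = X` when `χ(k) = ℓ` and
`Z_k = Y` when `χ(k) = r` (with `z_k = x` resp. `y`), if `n` is odd then
`τ₂(Z₁ ⋯ Z_n) = 0`, and if `n` is even then
`τ₂(Z₁ ⋯ Z_n) = (1/2)(φ(z₁^{p₁} ⋯ z_n^{p_n}) + φ(z₁^{q₁} ⋯ z_n^{q_n}))`, where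
along the `χ`-order `s_χ` the exponents `p` alternate `1, *, 1, *, …` and the
exponents `q` alternate `*, 1, *, 1, …`. -/
theorem tau2_moments_of_X_Y {𝒜 : Type*}
    [NormedRing 𝒜] [StarRing 𝒜] [CStarRing 𝒜] [NormedAlgebra ℂ 𝒜] [CompleteSpace 𝒜]
    [StarModule ℂ 𝒜]
    (φ : 𝒜 →ₗ[ℂ] ℂ) (hφ_one : φ 1 = 1) (hφ_pos : ∀ a : 𝒜, 0 ≤ φ (star a * a))
    (x y : 𝒜) {n : ℕ} (χ : Fin n → Bool) (s : Equiv.Perm (Fin n))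
    (hs : IsOrderPerm χ s) :
    (Odd n →
      tau2 φ ((List.ofFn (fun k : Fin n => if χ k then opX x else opY y)).prod) = 0) ∧
    (Even n →
      tau2 φ ((List.ofFn (fun k : Fin n => if χ k then opX x else opY y)).prod) =
        (1 / 2 : ℂ) *
          (φ ((List.ofFn (fun j : Fin n =>
                if (s.symm j : ℕ) % 2 = 0 then (if χ j then x else y)
                else star (if χ j then x else y))).prod) +
           φ ((List.ofFn (fun j : Fin n =>
                if (s.symm j : ℕ) % 2 = 0 then star (if χ j then x else y)
                else (if χ j then x else y))).prod))) := by
  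
  classical
  set w : List Bool := List.ofFn χ with hw
  have hmap : (List.ofFn fun k : Fin n => if χ k then opX x else opY y) =
      w.map (fun b : Bool => if b = true then opX x else opY y) := by
    rw [hw, List.map_ofFn]; rfl
  have hlen : w.length = n := List.length_ofFn
  have hct : w.count true + w.count false = n := by rw [count_tf, hlen]
  constructor
  · intro hn
    have hn1 : n % 2 = 1 := Nat.odd_iff.mp hn
    have hne : ((w.count true : Fin 2)) ≠ (w.count false : Fin 2) := by
      rw [Ne, fin2_cast_eq]; omega
    rw [hmap]
    unfold tau2
    have hz : ∀ i j : Fin 2,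
        ((w.map (fun b : Bool => if b = true then opX x else opY y)).prod) (i, i) (j, j) = 0 := by
      intro i j
      rw [prod_entry, if_neg]
      rintro ⟨h1, h2⟩
      exact hne (add_left_cancel ((h1.symm.trans h2)))
    simp [hz]
  · intro hn
    have hn0 : n % 2 = 0 := Nat.even_iff.mp hn
    have hcc : (w.count true : Fin 2) = (w.count false : Fin 2) := by
      rw [fin2_cast_eq]; omega
    rw [hmap]
    unfold tau2
    simp only [prod_entry, ← hcc, and_self]
    have hsum : ∀ i : Fin 2,
        (∑ j : Fin 2, φ (if j = i + (w.count true : Fin 2) then mono x y w i i else 0)) =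
          φ (mono x y w i i) := by
      intro i
      simp [apply_ite φ, Finset.sum_ite_eq']
    rw [Fin.sum_univ_two, hsum 0, hsum 1]
    congr 2
    · -- φ (mono w 0 0) = first term
      rw [hw, mono_ofFn]
      refine congrArg φ (congrArg (fun f : Fin n → 𝒜 => (List.ofFn f).prod)
        (funext fun k => ?_))
      cases hk : χ k with
      | true =>
        have hv := perm_true hs k hk
        by_cases h : ((s.symm k : ℕ)) % 2 = 0
        · have hc : ((cnt χ true (k : ℕ) : Fin 2)) = 0 := by rw [fin2_c0]; omega
          simp [hk, h, hc]
        · have hc : ¬ (((cnt χ true (k : ℕ) : Fin 2)) = 0) := by rw [fin2_c0]; omega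
          simp [hk, h, hc]
      | false =>
        have hv := perm_false hs k hk
        by_cases h : ((s.symm k : ℕ)) % 2 = 0
        · have hc : ((cnt χ false (k : ℕ) : Fin 2)) = 1 := by rw [fin2_c1]; omega
          simp [hk, h, hc]
        · have hc : ¬ (((cnt χ false (k : ℕ) : Fin 2)) = 1) := by
            rw [fin2_c1]; omega
          simp [hk, h, hc]
    · -- φ (mono w 1 1) = second term
      rw [hw, mono_ofFn]
      refine congrArg φ (congrArg (fun f : Fin n → 𝒜 => (List.ofFn f).prod)
        (funext fun k => ?_))
      cases hk : χ k with
      | true =>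
        have hv := perm_true hs k hk
        by_cases h : ((s.symm k : ℕ)) % 2 = 0
        · have hc : ¬ ((1 + (cnt χ true (k : ℕ) : Fin 2)) = 0) := by rw [fin2_1c0]; omega
          simp [hk, h, hc]
        · have hc : (1 + (cnt χ true (k : ℕ) : Fin 2)) = 0 := by rw [fin2_1c0]; omega
          simp [hk, h, hc]
      | false =>
        have hv := perm_false hs k hk
        by_cases h : ((s.symm k : ℕ)) % 2 = 0
        · have hc : ¬ ((1 + (cnt χ false (k : ℕ) : Fin 2)) = 1) := by rw [fin2_1c1]; omega
          simp [hk, h, hc]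
        · have hc : (1 + (cnt χ false (k : ℕ) : Fin 2)) = 1 := by rw [fin2_1c1]; omega
          simp [hk, h, hc]
end

section
/- Let $(\mathcal{A}, \varphi_0)$ be a non-commutative probability space containing commuting self-adjoint subalgebras generated by $\{c_\ell, c_\ell^*\}$ and $\{c_r, c_r^*\}$ which are classically independent with respect to $\varphi_0$ (i.e., $\varphi_0(P Q) = \varphi_0(P)\varphi_0(Q)$ for $P \in \mathrm{alg}(c_\ell, c_\ell^*)$, $Q \in \mathrm{alg}(c_r, c_r^*)$, and the two algebras commute). Suppose for all $n \in \mathbb{N}$: $\varphi_0((c_\ell^* c_\ell)^n) = \varphi_0((c_\ell c_\ell^*)^n)$, $\varphi_0(c_\ell (c_\ell^* c_\ell)^n) = 0 = \varphi_0(c_\ell^* (c_\ell c_\ell^*)^n)$, and the analogous identities for $c_r$. Then $(c_\ell, c_r)$ is alternating adjoint flipping with respect to $\varphi_0$. -/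
open List in
private theorem my_split_prod {ι M : Type*} [Monoid M] (l : List ι) (p : ι → Bool) (f : ι → M)
    (h : ∀ a ∈ l, ∀ b ∈ l, p a = true → p b = false → Commute (f a) (f b)) :
    (l.map f).prod =
      ((l.filter p).map f).prod * ((l.filter (fun i => !p i)).map f).prod := by
  induction l with
  | nil => simp
  | cons a t ih =>
    have ih' := ih (fun x hx y hy => h x (mem_cons_of_mem a hx) y (mem_cons_of_mem a hy))
    by_cases hp : p a = true
    · simp only [map_cons, prod_cons, filter_cons, hp, Bool.not_true, if_pos, ih']
      simp [mul_assoc]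
    · have hpa : p a = false := Bool.not_eq_true _ ▸ hp
      have hc : Commute (f a) ((t.filter p).map f).prod := by
        apply Commute.list_prod_right
        intro x hx
        obtain ⟨b, hb, rfl⟩ := mem_map.1 hx
        exact (h b (mem_cons_of_mem a (mem_of_mem_filter hb)) a mem_cons_self
          (of_mem_filter hb) hpa).symm
      simp only [map_cons, prod_cons, filter_cons, hpa, Bool.not_false, ih']
      simp only [Bool.false_eq_true, if_false, if_pos, map_cons, prod_cons]
      rw [← mul_assoc, ← mul_assoc, hc.eq]

private theorem my_filter_range_lt (m r : ℕ) :
    (List.range (m + r)).filter (fun x => decide (x < m)) = List.range m := by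
  rw [List.range_add, List.filter_append]
  have h1 : (List.range m).filter (fun x => decide (x < m)) = List.range m :=
    List.filter_eq_self.2 (fun x hx => by simp [List.mem_range.1 hx])
  have h2 : ((List.range r).map (fun x => m + x)).filter (fun x => decide (x < m)) = [] := by
    refine List.filter_eq_nil_iff.2 (fun x hx => ?_)
    obtain ⟨y, _, rfl⟩ := List.mem_map.1 hx
    simp
  rw [h1, h2, List.append_nil]

private theorem my_filter_range_ge (m r : ℕ) :
    (List.range (m + r)).filter (fun x => !decide (x < m)) =
      (List.range r).map (fun x => m + x) := by
  rw [List.range_add, List.filter_append]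
  have h1 : (List.range m).filter (fun x => !decide (x < m)) = [] :=
    List.filter_eq_nil_iff.2 (fun x hx => by simp [List.mem_range.1 hx])
  have h2 : ((List.range r).map (fun x => m + x)).filter (fun x => !decide (x < m)) =
      (List.range r).map (fun x => m + x) :=
    List.filter_eq_self.2 (fun x hx => by
      obtain ⟨y, _, rfl⟩ := List.mem_map.1 hx
      simp)
  rw [h1, h2, List.nil_append]

private theorem my_key {𝒜 : Type*} [Ring 𝒜] [Algebra ℂ 𝒜]
    (φ₀ : 𝒜 →ₗ[ℂ] ℂ) (Sl Sr : Subalgebra ℂ 𝒜)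
    (hcomm : ∀ p ∈ Sl, ∀ q ∈ Sr, p * q = q * p)
    (hindep : ∀ p ∈ Sl, ∀ q ∈ Sr, φ₀ (p * q) = φ₀ p * φ₀ q)
    {N m r : ℕ} (hNr : N = m + r) (χ : Fin N → Bool) (s : Equiv.Perm (Fin N))
    (hL : (List.finRange N).filter (fun j => χ j) =
      ((List.finRange N).filter (fun k => χ (s k))).map s)
    (hR : (List.finRange N).filter (fun j => !χ j) =
      (((List.finRange N).filter (fun k => !χ (s k))).map s).reverse)
    (hmem : ∀ k : Fin N, χ (s k) = true ↔ (k : ℕ) < m)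
    (f : Fin N → 𝒜) (g h : ℕ → 𝒜)
    (hfl : ∀ j, χ j = true → f j ∈ Sl) (hfr : ∀ j, χ j = false → f j ∈ Sr)
    (hg : ∀ k : Fin N, (k : ℕ) < m → f (s k) = g (k : ℕ))
    (hh : ∀ k : Fin N, ¬ ((k : ℕ) < m) → f (s k) = h (k : ℕ)) :
    φ₀ (List.ofFn f).prod =
      φ₀ ((List.range m).map g).prod *
        φ₀ ((((List.range r).map (fun x => h (m + x))).reverse).prod) := by
  have hfalse : ∀ k : Fin N, ¬ ((k : ℕ) < m) → χ (s k) = false := by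
    intro k hk
    cases hx : χ (s k) with
    | false => rfl
    | true => exact absurd ((hmem k).1 hx) hk
  rw [List.ofFn_eq_map,
    my_split_prod (List.finRange N) (fun j => χ j) f
      (fun a _ b _ ha hb => hcomm _ (hfl a ha) _ (hfr b hb))]
  have hAmem : (((List.finRange N).filter (fun j => χ j)).map f).prod ∈ Sl := by
    apply Subalgebra.list_prod_mem
    intro x hx
    obtain ⟨j, hj, rfl⟩ := List.mem_map.1 hx
    exact hfl j (List.of_mem_filter hj)
  have hBmem : (((List.finRange N).filter (fun j => !χ j)).map f).prod ∈ Sr := by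
    apply Subalgebra.list_prod_mem
    intro x hx
    obtain ⟨j, hj, rfl⟩ := List.mem_map.1 hx
    exact hfr j (by simpa using List.of_mem_filter hj)
  rw [hindep _ hAmem _ hBmem]
  have eχ : ∀ k : Fin N, χ (s k) = decide ((k : ℕ) < m) := by
    intro k
    by_cases hk : (k : ℕ) < m
    · simp [hk, (hmem k).2 hk]
    · simp [hk, hfalse k hk]
  congr 1
  · -- left factor
    rw [hL, List.map_map]
    have e1 : (List.finRange N).filter (fun k => χ (s k)) =
        (List.finRange N).filter (fun k : Fin N => decide ((k : ℕ) < m)) :=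
      List.filter_congr (fun k _ => eχ k)
    rw [e1]
    have e2 : ((List.finRange N).filter (fun k : Fin N => decide ((k : ℕ) < m))).map (f ∘ s) =
        ((List.finRange N).filter (fun k : Fin N => decide ((k : ℕ) < m))).map
          (fun k : Fin N => g (k : ℕ)) := by
      refine List.map_congr_left (fun k hk => ?_)
      exact hg k (by simpa using List.of_mem_filter hk)
    rw [e2, show (fun k : Fin N => g (k : ℕ)) = g ∘ Fin.val from rfl, ← List.map_map]
    have e3 : ((List.finRange N).filter (fun k : Fin N => decide ((k : ℕ) < m))).map Fin.val =
        List.range m := by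
      have h3 := List.filter_map (p := fun x => decide (x < m)) (f := Fin.val)
        (l := List.finRange N)
      rw [(show (List.finRange N).map Fin.val = List.range N from
          List.ext_getElem (by simp) (by simp)),
        show List.range N = List.range (m + r) from by rw [hNr], my_filter_range_lt] at h3
      exact h3.symm
    rw [e3]
  · -- right factor
    rw [hR, List.map_reverse, List.map_map]
    have e1 : (List.finRange N).filter (fun k => !χ (s k)) =
        (List.finRange N).filter (fun k : Fin N => !decide ((k : ℕ) < m)) :=
      List.filter_congr (fun k _ => by simp only [eχ k])
    rw [e1]
    have e2 : ((List.finRange N).filter (fun k : Fin N => !decide ((k : ℕ) < m))).map (f ∘ s) =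
        ((List.finRange N).filter (fun k : Fin N => !decide ((k : ℕ) < m))).map
          (fun k : Fin N => h (k : ℕ)) := by
      refine List.map_congr_left (fun k hk => ?_)
      exact hh k (by simpa using List.of_mem_filter hk)
    rw [e2, show (fun k : Fin N => h (k : ℕ)) = h ∘ Fin.val from rfl, ← List.map_map]
    have e3 : ((List.finRange N).filter (fun k : Fin N => !decide ((k : ℕ) < m))).map Fin.val =
        (List.range r).map (fun x => m + x) := by
      have h3 := List.filter_map (p := fun x => !decide (x < m)) (f := Fin.val)
        (l := List.finRange N)
      rw [(show (List.finRange N).map Fin.val = List.range N from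
          List.ext_getElem (by simp) (by simp)),
        show List.range N = List.range (m + r) from by rw [hNr], my_filter_range_ge] at h3
      exact h3.symm
    rw [e3, List.map_map]
    rfl

private theorem my_alt_prod {M : Type*} [Monoid M] (a b : M) :
    ∀ t : ℕ, ((List.range (2*t)).map (fun x => if x % 2 = 0 then a else b)).prod = (a*b)^t
  | 0 => by simp
  | (t+1) => by
    have h1 : 2 * (t+1) = (2*t) + 1 + 1 := by ring
    have h2 : (2*t) % 2 = 0 := by omega
    have h3 : (2*t+1) % 2 = 1 := by omega
    rw [h1, List.range_succ, List.range_succ]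
    simp only [List.map_append, List.prod_append, List.map_cons, List.map_nil, List.prod_cons,
      List.prod_nil, h2, h3, if_pos, my_alt_prod a b t]
    simp only [Nat.one_ne_zero, if_false, if_pos rfl]
    rw [pow_succ]
    simp [mul_assoc]

private theorem my_alt_prod_odd {M : Type*} [Monoid M] (a b : M) (t : ℕ) :
    ((List.range (2*t+1)).map (fun x => if x % 2 = 0 then a else b)).prod = (a*b)^t * a := by
  have h2 : (2*t) % 2 = 0 := by omega
  rw [List.range_succ]
  simp [my_alt_prod a b t, h2]

private theorem my_alt_prod_rev {M : Type*} [Monoid M] (a b : M) :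
    ∀ t : ℕ, (((List.range (2*t)).map (fun x => if x % 2 = 0 then a else b)).reverse).prod
      = (b*a)^t
  | 0 => by simp
  | (t+1) => by
    have h1 : 2 * (t+1) = (2*t) + 1 + 1 := by ring
    have h2 : (2*t) % 2 = 0 := by omega
    have h3 : (2*t+1) % 2 = 1 := by omega
    rw [h1, List.range_succ, List.range_succ]
    simp only [List.map_append, List.reverse_append, List.map_cons, List.map_nil,
      List.reverse_cons, List.reverse_nil, List.nil_append, List.prod_append, List.prod_cons,
      List.prod_nil, List.cons_append, h2, h3]
    simp only [Nat.one_ne_zero, if_false, if_pos rfl, my_alt_prod_rev a b t]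
    rw [pow_succ']
    simp [mul_assoc]

private theorem my_left_filter {N : ℕ} (χ : Fin N → Bool) (s : Equiv.Perm (Fin N))
    (hs1 : ∀ k l : Fin N, χ (s k) = true → χ (s l) = true → (k ≤ l ↔ s k ≤ s l)) :
    (List.finRange N).filter (fun j => χ j) =
      ((List.finRange N).filter (fun k => χ (s k))).map s := by
  have hnd1 : ((List.finRange N).filter (fun j => χ j)).Nodup :=
    (List.nodup_finRange N).filter _
  have hnd2 : (((List.finRange N).filter (fun k => χ (s k))).map s).Nodup :=
    ((List.nodup_finRange N).filter _).map s.injective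
  have hfs : ((List.finRange N).filter (fun j => χ j)).toFinset =
      (((List.finRange N).filter (fun k => χ (s k))).map s).toFinset := by
    ext j
    simp only [List.mem_toFinset, List.mem_filter, List.mem_finRange, true_and, List.mem_map]
    constructor
    · intro hj
      exact ⟨s.symm j, by simpa using hj, by simp⟩
    · rintro ⟨k, hk, rfl⟩
      exact hk
  refine @List.Perm.eq_of_pairwise' _ (· ≤ ·) ⟨fun _ _ h h' => le_antisymm h h'⟩ _ _ ?_ ?_
    (List.perm_of_nodup_nodup_toFinset_eq hnd1 hnd2 hfs)
  · exact ((List.pairwise_lt_finRange N).filter _).imp le_of_lt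
  · rw [List.pairwise_map]
    refine List.Pairwise.imp_of_mem ?_ ((List.pairwise_lt_finRange N).filter _)
    intro a b ha hb hab
    have hca : χ (s a) = true := (List.mem_filter.1 ha).2
    have hcb : χ (s b) = true := (List.mem_filter.1 hb).2
    exact (hs1 a b hca hcb).1 hab.le

private theorem my_right_filter {N : ℕ} (χ : Fin N → Bool) (s : Equiv.Perm (Fin N))
    (hs2 : ∀ k l : Fin N, χ (s k) = false → χ (s l) = false → (k ≤ l ↔ s l ≤ s k)) :
    (List.finRange N).filter (fun j => !χ j) =
      (((List.finRange N).filter (fun k => !χ (s k))).map s).reverse := by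
  have hnd1 : ((List.finRange N).filter (fun j => !χ j)).Nodup :=
    (List.nodup_finRange N).filter _
  have hnd2 : ((((List.finRange N).filter (fun k => !χ (s k))).map s).reverse).Nodup :=
    List.nodup_reverse.2 (((List.nodup_finRange N).filter _).map s.injective)
  have hfs : ((List.finRange N).filter (fun j => !χ j)).toFinset =
      ((((List.finRange N).filter (fun k => !χ (s k))).map s).reverse).toFinset := by
    ext j
    simp only [List.mem_toFinset, List.mem_filter, List.mem_finRange, true_and, List.mem_map,
      List.mem_reverse]
    constructor
    · intro hj
      exact ⟨s.symm j, by simpa using hj, by simp⟩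
    · rintro ⟨k, hk, rfl⟩
      exact hk
  refine @List.Perm.eq_of_pairwise' _ (· ≤ ·) ⟨fun _ _ h h' => le_antisymm h h'⟩ _ _ ?_ ?_
    (List.perm_of_nodup_nodup_toFinset_eq hnd1 hnd2 hfs)
  · exact ((List.pairwise_lt_finRange N).filter _).imp le_of_lt
  · rw [List.pairwise_reverse, List.pairwise_map]
    refine List.Pairwise.imp_of_mem ?_ ((List.pairwise_lt_finRange N).filter _)
    intro a b ha hb hab
    have hca : χ (s a) = false := by simpa using (List.mem_filter.1 ha).2
    have hcb : χ (s b) = false := by simpa using (List.mem_filter.1 hb).2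
    exact (hs2 a b hca hcb).1 hab.le

/-- The pair `(x, y)` is alternating adjoint flipping with respect to `φ`: for every
even-length word with `z_k = x` at left positions and `z_k = y` at right positions,
assigning exponents that alternate `1, *, 1, *, …` along the `χ`-order `s_χ` yields
the same `φ`-moment as assigning the flipped exponents `*, 1, *, 1, …`. -/
def AlternatingAdjointFlipping {𝒜 : Type*} [Monoid 𝒜] [StarMul 𝒜]
    (φ : 𝒜 → ℂ) (x y : 𝒜) : Prop :=
  ∀ (n : ℕ) (χ : Fin (2 * n) → Bool) (s : Equiv.Perm (Fin (2 * n))),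
    IsOrderPerm χ s →
    φ ((List.ofFn (fun j : Fin (2 * n) =>
        if (s.symm j : ℕ) % 2 = 0 then (if χ j then x else y)
        else star (if χ j then x else y))).prod) =
    φ ((List.ofFn (fun j : Fin (2 * n) =>
        if (s.symm j : ℕ) % 2 = 0 then star (if χ j then x else y)
        else (if χ j then x else y))).prod)

/-- If the commuting `*`-subalgebras generated by `{c_ℓ, c_ℓ^*}` and `{c_r, c_r^*}`
are classically independent with respect to `φ₀`, and for all `n ∈ ℕ`:
`φ₀((c_ℓ^* c_ℓ)^n) = φ₀((c_ℓ c_ℓ^*)^n)`,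
`φ₀(c_ℓ (c_ℓ^* c_ℓ)^n) = 0 = φ₀(c_ℓ^* (c_ℓ c_ℓ^*)^n)`, and the analogous identities
hold for `c_r`, then the pair `(c_ℓ, c_r)` is alternating adjoint flipping with
respect to `φ₀`. -/
theorem independent_commuting_implies_alternatingAdjointFlipping {𝒜 : Type*}
    [Ring 𝒜] [StarRing 𝒜] [Algebra ℂ 𝒜]
    (φ₀ : 𝒜 →ₗ[ℂ] ℂ) (hφ_one : φ₀ 1 = 1) (cl cr : 𝒜)
    (hcomm : ∀ p ∈ Algebra.adjoin ℂ ({cl, star cl} : Set 𝒜),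
      ∀ q ∈ Algebra.adjoin ℂ ({cr, star cr} : Set 𝒜), p * q = q * p)
    (hindep : ∀ p ∈ Algebra.adjoin ℂ ({cl, star cl} : Set 𝒜),
      ∀ q ∈ Algebra.adjoin ℂ ({cr, star cr} : Set 𝒜), φ₀ (p * q) = φ₀ p * φ₀ q)
    (hl₁ : ∀ n : ℕ, φ₀ ((star cl * cl) ^ n) = φ₀ ((cl * star cl) ^ n))
    (hl₂ : ∀ n : ℕ, φ₀ (cl * (star cl * cl) ^ n) = 0)
    (hl₃ : ∀ n : ℕ, φ₀ (star cl * (cl * star cl) ^ n) = 0)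
    (hr₁ : ∀ n : ℕ, φ₀ ((star cr * cr) ^ n) = φ₀ ((cr * star cr) ^ n))
    (hr₂ : ∀ n : ℕ, φ₀ (cr * (star cr * cr) ^ n) = 0)
    (hr₃ : ∀ n : ℕ, φ₀ (star cr * (cr * star cr) ^ n) = 0) :
    AlternatingAdjointFlipping (fun a => φ₀ a) cl cr := by
  intro n χ s hs
  obtain ⟨hs1, hs2, hs3⟩ := hs
  classical
  set T : Finset (Fin (2*n)) := Finset.univ.filter (fun k => χ (s k) = true) with hT
  set m := T.card with hmdef
  have hmem : ∀ k : Fin (2*n), χ (s k) = true ↔ (k : ℕ) < m := by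
    intro k
    constructor
    · intro hk
      have hsub : Finset.Iic k ⊆ T := by
        intro l hl
        rw [hT, Finset.mem_filter]
        refine ⟨Finset.mem_univ l, ?_⟩
        by_contra hc
        have hlf : χ (s l) = false := by
          cases h' : χ (s l) with
          | false => rfl
          | true => exact absurd h' hc
        exact absurd (Finset.mem_Iic.1 hl) (not_le.2 (hs3 k l hk hlf))
      have hcard := Finset.card_le_card hsub
      rw [Fin.card_Iic] at hcard
      omega
    · intro hk
      by_contra hc
      have hkf : χ (s k) = false := by
        cases h' : χ (s k) with
        | false => rfl
        | true => exact absurd h' hc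
      have hsub : T ⊆ Finset.Iio k := by
        intro l hl
        rw [hT, Finset.mem_filter] at hl
        exact Finset.mem_Iio.2 (hs3 l k hl.2 hkf)
      have hcard := Finset.card_le_card hsub
      rw [Fin.card_Iio] at hcard
      omega
  have hfalse : ∀ k : Fin (2*n), ¬ ((k : ℕ) < m) → χ (s k) = false := by
    intro k hk
    cases hx : χ (s k) with
    | false => rfl
    | true => exact absurd ((hmem k).1 hx) hk
  have hmN : m ≤ 2*n := by
    have := Finset.card_le_univ T
    simp only [Finset.card_univ, Fintype.card_fin] at this
    omega
  clear_value T m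
  obtain ⟨r, hr⟩ : ∃ r, 2*n = m + r := ⟨2*n - m, by omega⟩
  have hL := my_left_filter χ s hs1
  have hR := my_right_filter χ s hs2
  have memL : ∀ x : 𝒜, x = cl ∨ x = star cl → x ∈ Algebra.adjoin ℂ ({cl, star cl} : Set 𝒜) := by
    rintro x (rfl | rfl) <;> exact Algebra.subset_adjoin (by simp)
  have memR : ∀ x : 𝒜, x = cr ∨ x = star cr → x ∈ Algebra.adjoin ℂ ({cr, star cr} : Set 𝒜) := by
    rintro x (rfl | rfl) <;> exact Algebra.subset_adjoin (by simp)
  have K1 := my_key φ₀ (Algebra.adjoin ℂ ({cl, star cl} : Set 𝒜))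
    (Algebra.adjoin ℂ ({cr, star cr} : Set 𝒜)) hcomm hindep hr χ s hL hR hmem
    (fun j : Fin (2 * n) =>
        if (s.symm j : ℕ) % 2 = 0 then (if χ j then cl else cr)
        else star (if χ j then cl else cr))
    (fun x => if x % 2 = 0 then cl else star cl)
    (fun x => if x % 2 = 0 then cr else star cr)
    (by
      intro j hj
      simp only [hj, if_true]
      split_ifs
      · exact memL cl (Or.inl rfl)
      · exact memL (star cl) (Or.inr rfl))
    (by
      intro j hj
      simp only [hj, Bool.false_eq_true, if_false]
      split_ifs
      · exact memR cr (Or.inl rfl)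
      · exact memR (star cr) (Or.inr rfl))
    (by
      intro k hk
      simp only [Equiv.symm_apply_apply, (hmem k).2 hk, if_true])
    (by
      intro k hk
      simp only [Equiv.symm_apply_apply, hfalse k hk, Bool.false_eq_true, if_false])
  have K2 := my_key φ₀ (Algebra.adjoin ℂ ({cl, star cl} : Set 𝒜))
    (Algebra.adjoin ℂ ({cr, star cr} : Set 𝒜)) hcomm hindep hr χ s hL hR hmem
    (fun j : Fin (2 * n) =>
        if (s.symm j : ℕ) % 2 = 0 then star (if χ j then cl else cr)
        else (if χ j then cl else cr))
    (fun x => if x % 2 = 0 then star cl else cl)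
    (fun x => if x % 2 = 0 then star cr else cr)
    (by
      intro j hj
      simp only [hj, if_true]
      split_ifs
      · exact memL (star cl) (Or.inr rfl)
      · exact memL cl (Or.inl rfl))
    (by
      intro j hj
      simp only [hj, Bool.false_eq_true, if_false]
      split_ifs
      · exact memR (star cr) (Or.inr rfl)
      · exact memR cr (Or.inl rfl))
    (by
      intro k hk
      simp only [Equiv.symm_apply_apply, (hmem k).2 hk, if_true])
    (by
      intro k hk
      simp only [Equiv.symm_apply_apply, hfalse k hk, Bool.false_eq_true, if_false])
  show φ₀ _ = φ₀ _
  rw [K1, K2]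
  beta_reduce
  rcases Nat.even_or_odd m with he | ho
  · obtain ⟨u, hu⟩ := he
    have hu' : m = 2 * u := by omega
    obtain ⟨t, ht⟩ : ∃ t, r = 2 * t := ⟨r / 2, by omega⟩
    rw [hu', ht]
    have e1 : (fun x : ℕ => if (2 * u + x) % 2 = 0 then cr else star cr)
        = (fun x : ℕ => if x % 2 = 0 then cr else star cr) := by
      funext x
      exact if_congr (by omega) rfl rfl
    have e2 : (fun x : ℕ => if (2 * u + x) % 2 = 0 then star cr else cr)
        = (fun x : ℕ => if x % 2 = 0 then star cr else cr) := by
      funext x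
      exact if_congr (by omega) rfl rfl
    rw [e1, e2, my_alt_prod, my_alt_prod, my_alt_prod_rev, my_alt_prod_rev]
    rw [← hl₁ u, hr₁ t]
  · obtain ⟨u, hu⟩ := ho
    rw [hu, my_alt_prod_odd, my_alt_prod_odd]
    have sc1 : cl * (star cl * cl) ^ u = (cl * star cl) ^ u * cl :=
      SemiconjBy.pow_right (by simp [SemiconjBy, mul_assoc]) u
    have sc2 : star cl * (cl * star cl) ^ u = (star cl * cl) ^ u * star cl :=
      SemiconjBy.pow_right (by simp [SemiconjBy, mul_assoc]) u
    rw [← sc1, ← sc2, hl₂ u, hl₃ u, zero_mul, zero_mul]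
end
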